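/- For fixed n ∈ ℕ, d ∈ ℕ, ν ≥ 0 and β > 0, the coefficients ω_n(ν,μ) := Γ(2ν+2n+d) Γ(μ+2ν+1) Γ(ν) δ_{ν,μ,β}^{2n+d} / (n! Γ(2ν) Γ(μ+2ν+2n+d+1) Γ(ν+d/2+n)) satisfy lim_{μ→∞} ω_n(ν,μ) = 2^{d+2n} Γ((d+1)/2 + ν) ((d+1)/2 + ν)_n β^{d+2n} / (n! Γ(ν + 1/2)), for ν > 0. -/

import Mathlib

/-
Log-convexity of Γ (Hölder's inequality on Euler's integral), applied between x and x + 1 and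
between x + s and x + s + 1, gives Wendel's inequality
(x / (x + s)) ^ (1 - s) ≤ Γ(x + s) / (Γ(x) x ^ s) ≤ 1 for 0 < s < 1. Hence Γ(x + a) ~ Γ(x) x ^ a,
first for 0 ≤ a < 1 and then for every a ≥ 0 through Γ(x + 1) = x Γ(x). Consequently
δ_{ν,μ,β} ~ β μ and Γ(μ + 2ν + 1) / Γ(μ + 2ν + 2n + d + 1) ~ μ ^ -(2n + d), so all dependence on
μ cancels, and Legendre's duplication formula at ν and at ν + d/2 + n turns the remaining
constant into the stated one.
-/

open Real Filter

/-- The rescaled compact support parameter of the reparametrized generalized Wendland model. -/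
noncomputable def gwDelta (ν μ β : ℝ) : ℝ :=
  β * (Real.Gamma (μ + 2 * ν + 1) / Real.Gamma μ) ^ (1 / (1 + 2 * ν))

open Topology

namespace Real

lemma tendsto_add_div_self_atTop (a : ℝ) : Tendsto (fun x : ℝ => (x + a) / x) atTop (𝓝 1) := by
  refine (by simpa using tendsto_const_nhds.add (tendsto_const_nhds (x := a).div_atTop tendsto_id) :
    Tendsto (fun x : ℝ => 1 + a / x) atTop (𝓝 1)).congr' ?_
  filter_upwards [eventually_gt_atTop 0] with x hx
  field_simp

variable {x s : ℝ}

lemma Gamma_add_div_Gamma_mul_rpow_le_one (hx : 0 < x) (hs0 : 0 < s) (hs1 : s < 1) :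
    Gamma (x + s) / (Gamma x * x ^ s) ≤ 1 := by
  have hΓ := Gamma_pos_of_pos hx
  rw [div_le_one (by positivity)]
  calc Gamma (x + s) = Gamma ((1 - s) * x + s * (x + 1)) := by ring_nf
    _ ≤ Gamma x ^ (1 - s) * Gamma (x + 1) ^ s :=
      Gamma_mul_add_mul_le_rpow_Gamma_mul_rpow_Gamma hx (by positivity) (by linarith) hs0 (by ring)
    _ = Gamma x * x ^ s := by
      rw [Gamma_add_one hx.ne', mul_rpow hx.le hΓ.le, mul_left_comm, ← rpow_add hΓ]
      norm_num [mul_comm]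

lemma rpow_div_add_le_Gamma_add_div_Gamma_mul_rpow (hx : 0 < x) (hs0 : 0 < s) (hs1 : s < 1) :
    (x / (x + s)) ^ (1 - s) ≤ Gamma (x + s) / (Gamma x * x ^ s) := by
  have hxs : 0 < x + s := by positivity
  have hΓs := Gamma_pos_of_pos hxs
  have hconv : x * Gamma x ≤ Gamma (x + s) * (x + s) ^ (1 - s) :=
    calc x * Gamma x = Gamma (s * (x + s) + (1 - s) * (x + s + 1)) := by
          rw [← Gamma_add_one hx.ne']; ring_nf
      _ ≤ Gamma (x + s) ^ s * Gamma (x + s + 1) ^ (1 - s) :=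
        Gamma_mul_add_mul_le_rpow_Gamma_mul_rpow_Gamma hxs (by positivity) hs0 (by linarith)
          (by ring)
      _ = Gamma (x + s) * (x + s) ^ (1 - s) := by
        rw [Gamma_add_one hxs.ne', mul_rpow hxs.le hΓs.le, ← mul_assoc, mul_right_comm,
          ← rpow_add hΓs]
        norm_num
  rw [div_rpow hx.le hxs.le, div_le_div_iff₀ (by positivity) (by positivity)]
  calc x ^ (1 - s) * (Gamma x * x ^ s) = x * Gamma x := by
        rw [mul_left_comm, ← rpow_add hx]; norm_num [mul_comm]
    _ ≤ Gamma (x + s) * (x + s) ^ (1 - s) := hconv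

lemma tendsto_Gamma_add_div_Gamma_mul_rpow_of_lt_one (hs0 : 0 ≤ s) (hs1 : s < 1) :
    Tendsto (fun x => Gamma (x + s) / (Gamma x * x ^ s)) atTop (𝓝 1) := by
  rcases hs0.eq_or_lt with rfl | hs0
  · refine tendsto_const_nhds.congr' ?_
    filter_upwards [eventually_gt_atTop 0] with x hx
    simp [(Gamma_pos_of_pos hx).ne']
  have hlow : Tendsto (fun x : ℝ => (x / (x + s)) ^ (1 - s)) atTop (𝓝 1) := by
    simpa using ((tendsto_add_div_self_atTop s).inv₀ one_ne_zero).rpow_const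
      (Or.inl (by norm_num)) (p := 1 - s)
  refine tendsto_of_tendsto_of_tendsto_of_le_of_le' hlow tendsto_const_nhds ?_ ?_
  · filter_upwards [eventually_gt_atTop 0] with x hx
    exact rpow_div_add_le_Gamma_add_div_Gamma_mul_rpow hx hs0 hs1
  · filter_upwards [eventually_gt_atTop 0] with x hx
    exact Gamma_add_div_Gamma_mul_rpow_le_one hx hs0 hs1

lemma tendsto_Gamma_add_add_one_div_Gamma_mul_rpow {a : ℝ}
    (h : Tendsto (fun x => Gamma (x + a) / (Gamma x * x ^ a)) atTop (𝓝 1)) :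
    Tendsto (fun x => Gamma (x + (a + 1)) / (Gamma x * x ^ (a + 1))) atTop (𝓝 1) := by
  have h' : Tendsto (fun x => Gamma (x + a) / (Gamma x * x ^ a) * ((x + a) / x)) atTop (𝓝 1) :=
    by simpa using h.mul (tendsto_add_div_self_atTop a)
  refine h'.congr' ?_
  filter_upwards [eventually_gt_atTop 0, eventually_gt_atTop (-a)] with x hx hxa
  have := (Gamma_pos_of_pos hx).ne'
  have := (rpow_pos_of_pos hx a).ne'
  rw [← add_assoc, Gamma_add_one (by linarith), rpow_add_one hx.ne']
  field_simp

theorem tendsto_Gamma_add_div_Gamma_mul_rpow {a : ℝ} (ha : 0 ≤ a) :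
    Tendsto (fun x => Gamma (x + a) / (Gamma x * x ^ a)) atTop (𝓝 1) := by
  set s := a - ⌊a⌋₊
  have hk : ∀ k : ℕ, Tendsto (fun x => Gamma (x + (s + k)) / (Gamma x * x ^ (s + k)))
      atTop (𝓝 1) := by
    intro k
    induction k with
    | zero =>
      simpa using tendsto_Gamma_add_div_Gamma_mul_rpow_of_lt_one
        (by linarith [Nat.floor_le ha]) (by linarith [Nat.lt_floor_add_one a])
    | succ k ih => simpa [add_assoc] using tendsto_Gamma_add_add_one_div_Gamma_mul_rpow ih
  simpa [s] using hk ⌊a⌋₊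

theorem tendsto_Gamma_add_div_Gamma_add_mul_rpow {a b : ℝ} (hba : b ≤ a) :
    Tendsto (fun x => Gamma (x + a) / (Gamma (x + b) * x ^ (a - b))) atTop (𝓝 1) := by
  have h := ((tendsto_Gamma_add_div_Gamma_mul_rpow (sub_nonneg.2 hba)).comp
    (tendsto_atTop_add_const_right atTop b tendsto_id)).mul
    ((tendsto_add_div_self_atTop b).rpow_const (Or.inl one_ne_zero) (p := a - b))
  have h' : Tendsto (fun x => Gamma (x + a) / (Gamma (x + b) * (x + b) ^ (a - b)) *
      ((x + b) / x) ^ (a - b)) atTop (𝓝 1) := by simpa using h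
  refine h'.congr' ?_
  filter_upwards [eventually_gt_atTop 0, eventually_gt_atTop (-b)] with x hx hxb
  have := (Gamma_pos_of_pos (by linarith : 0 < x + b)).ne'
  have := (rpow_pos_of_pos hx (a - b)).ne'
  have := (rpow_pos_of_pos (by linarith : 0 < x + b) (a - b)).ne'
  rw [div_rpow (by linarith) hx.le]
  field_simp

theorem Gamma_two_mul_div_Gamma {s : ℝ} (hs : 0 < s) :
    Gamma (2 * s) / Gamma s = 2 ^ (2 * s - 1) * Gamma (s + 1 / 2) / √π := by
  have := (Gamma_pos_of_pos hs).ne'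
  have := (sqrt_pos.2 pi_pos).ne'
  have h2 : (2 : ℝ) ^ (2 * s - 1) * 2 ^ (1 - 2 * s) = 1 := by
    rw [← rpow_add two_pos]; norm_num
  rw [div_eq_div_iff ‹_› ‹_›, mul_right_comm, mul_assoc, Gamma_mul_Gamma_add_half]
  linear_combination -(Gamma (2 * s) * √π) * h2

theorem Gamma_two_mul_div_Gamma_div_Gamma_two_mul_div_Gamma {s t : ℝ} (hs : 0 < s) (ht : 0 < t) :
    Gamma (2 * s) / Gamma s / (Gamma (2 * t) / Gamma t) =
      2 ^ (2 * (s - t)) * Gamma (s + 1 / 2) / Gamma (t + 1 / 2) := by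
  have := (Gamma_pos_of_pos (by positivity : 0 < t + 1 / 2)).ne'
  have := (sqrt_pos.2 pi_pos).ne'
  have := (rpow_pos_of_pos two_pos (2 * t - 1)).ne'
  have h2 : (2 : ℝ) ^ (2 * s - 1) = 2 ^ (2 * (s - t)) * 2 ^ (2 * t - 1) := by
    rw [← rpow_add two_pos]; ring_nf
  rw [Gamma_two_mul_div_Gamma hs, Gamma_two_mul_div_Gamma ht, h2]
  field_simp

end Real

lemma tendsto_gwDelta_div_self {ν : ℝ} (hν : 0 < 1 + 2 * ν) (β : ℝ) :
    Tendsto (fun μ => gwDelta ν μ β / μ) atTop (𝓝 β) := by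
  have h := ((tendsto_Gamma_add_div_Gamma_mul_rpow hν.le).rpow_const
    (Or.inl one_ne_zero) (p := 1 / (1 + 2 * ν))).const_mul β
  rw [one_rpow, mul_one] at h
  refine h.congr' ?_
  filter_upwards [eventually_gt_atTop 0] with μ hμ
  have := Gamma_pos_of_pos hμ
  have := Gamma_pos_of_pos (by linarith : 0 < μ + (1 + 2 * ν))
  rw [gwDelta, ← div_div, div_rpow (by positivity) (by positivity), ← rpow_mul hμ.le,
    mul_one_div_cancel hν.ne', rpow_one, mul_div_assoc]
  ring_nf

theorem stmt_7_general (ν β : ℝ) (hν : 0 < ν) (n d : ℕ) :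
    Filter.Tendsto
      (fun μ : ℝ =>
        Real.Gamma (2 * ν + 2 * n + d) * Real.Gamma (μ + 2 * ν + 1) * Real.Gamma ν *
          gwDelta ν μ β ^ (2 * n + d) /
        ((n.factorial : ℝ) * Real.Gamma (2 * ν) * Real.Gamma (μ + 2 * ν + 2 * n + d + 1) *
          Real.Gamma (ν + d / 2 + n)))
      Filter.atTop
      (nhds (2 ^ (d + 2 * n) * Real.Gamma ((d + 1) / 2 + ν) *
        (Real.Gamma ((d + 1) / 2 + ν + n) / Real.Gamma ((d + 1) / 2 + ν)) * β ^ (d + 2 * n) /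
        ((n.factorial : ℝ) * Real.Gamma (ν + 1 / 2)))) := by
  set m := 2 * n + d
  have hδ := (tendsto_gwDelta_div_self (by linarith : 0 < 1 + 2 * ν) β).pow m
  have hΓ := (tendsto_Gamma_add_div_Gamma_add_mul_rpow
    (a := 2 * ν + 1 + m) (b := 2 * ν + 1) (by simp)).inv₀ one_ne_zero
  have hlim := (hδ.mul hΓ).const_mul
    (Gamma (2 * (ν + d / 2 + n)) / Gamma (ν + d / 2 + n) / (Gamma (2 * ν) / Gamma ν) / n.factorial)
  convert hlim.congr' ?_ using 2
  · rw [Gamma_two_mul_div_Gamma_div_Gamma_two_mul_div_Gamma (by positivity) hν]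
    have e1 : 2 * (ν + d / 2 + n - ν) = ((d + 2 * n : ℕ) : ℝ) := by push_cast; ring
    have e2 : ν + d / 2 + n + 1 / 2 = (d + 1) / 2 + ν + n := by ring
    have := (Gamma_pos_of_pos (by positivity : 0 < ((d : ℝ) + 1) / 2 + ν)).ne'
    rw [e1, e2, rpow_natCast, show m = d + 2 * n by ring]
    field_simp
  · filter_upwards [eventually_gt_atTop 0] with μ hμ
    have e1 : 2 * (ν + d / 2 + n) = 2 * ν + 2 * n + d := by ring
    have e2 : μ + (2 * ν + 1 + m) = μ + 2 * ν + 2 * n + d + 1 := by push_cast [m]; ring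
    have e3 : μ + (2 * ν + 1) = μ + 2 * ν + 1 := by ring
    rw [e1, e2, e3, add_sub_cancel_left, rpow_natCast, div_pow]
    have := hμ.ne'
    have := (Gamma_pos_of_pos hν).ne'
    have := (Gamma_pos_of_pos (by positivity : 0 < ν + d / 2 + n)).ne'
    have := (Gamma_pos_of_pos (by positivity : 0 < μ + 2 * ν + 1)).ne'
    have := (Gamma_pos_of_pos (by positivity : 0 < μ + 2 * ν + 2 * n + d + 1)).ne'
    field_simp

theorem stmt_7 (ν β : ℝ) (hν : 0 < ν) (hβ : 0 < β) (n d : ℕ) :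
    Filter.Tendsto
      (fun μ : ℝ =>
        Real.Gamma (2 * ν + 2 * n + d) * Real.Gamma (μ + 2 * ν + 1) * Real.Gamma ν *
          gwDelta ν μ β ^ (2 * n + d) /
        ((n.factorial : ℝ) * Real.Gamma (2 * ν) * Real.Gamma (μ + 2 * ν + 2 * n + d + 1) *
          Real.Gamma (ν + d / 2 + n)))
      Filter.atTop
      (nhds (2 ^ (d + 2 * n) * Real.Gamma ((d + 1) / 2 + ν) *
        (Real.Gamma ((d + 1) / 2 + ν + n) / Real.Gamma ((d + 1) / 2 + ν)) * β ^ (d + 2 * n) /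
        ((n.factorial : ℝ) * Real.Gamma (ν + 1 / 2)))) :=
  stmt_7_general ν β hν n d
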